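/- Let T be a tree with a single centroid, and let edge e_a separate edge e_b from the centroid (i.e., after removing e_a, edge e_b and the centroid lie in different components). Then θ_T(e_a) > θ_T(e_b) in the ordering where (n−i, i) > (n−j, j) iff i > j (with i, j ≤ n/2 the smaller parts). -/

import Mathlib

/-!
Write `farSide T c e` for the vertices that deleting the edge `e` cuts off from the centroid `c`.
Deleting an edge of a tree leaves two components, `farSide T c e` and its complement, so
`|farSide T c e|` is a part of `θ_T(e)`. It is the smaller part: `farSide T c e` lies in a single
branch at `c`, while every branch at its endpoint `x` lies in `farSide T c e \ {x}` or in the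
complement, so if the complement were not larger, `x` would weigh at most as much as `c`,
against the uniqueness of the centroid. Finally, if `e_a` separates `e_b` from `c`, then
`farSide T c e_b` is a proper subset of `farSide T c e_a`: it misses the endpoint of `e_b` nearer
to `c`.
-/

open SimpleGraph

/-- The multiset of sizes of the connected components of `G`. -/
noncomputable def componentSizes {V : Type*} [Finite V] (G : SimpleGraph V) : Multiset ℕ :=
  haveI : Fintype G.ConnectedComponent := Fintype.ofFinite _
  (Finset.univ : Finset G.ConnectedComponent).val.map fun c => c.supp.ncard

/-- `theta T S` is the partition (as a multiset) of `|V|` whose parts are the sizes of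
the connected components of `T` with the edges of `S` removed. -/
noncomputable def theta {V : Type*} [Finite V] (T : SimpleGraph V) (S : Set (Sym2 V)) :
    Multiset ℕ := componentSizes (T.deleteEdges S)

/-- The weight of a vertex `v` of a tree `T`: the maximal number of edges of a subtree
of `T` containing `v` as a leaf; equivalently, the maximal number of vertices of a
connected component of `T - v`. -/
noncomputable def weight {V : Type*} [Finite V] (T : SimpleGraph V) (v : V) : ℕ :=
  sSup (Set.range fun c : ((⊤ : T.Subgraph).deleteVerts {v}).coe.ConnectedComponent =>
    c.supp.ncard)

/-- The centroid of `T`: the set of vertices of minimal weight. -/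
def centroid {V : Type*} [Finite V] (T : SimpleGraph V) : Set V :=
  {v | ∀ u, weight T v ≤ weight T u}

namespace SimpleGraph

variable {V : Type*} {T : SimpleGraph V}

theorem Connected.reachable_or_reachable_deleteEdges (hT : T.Connected) (x y v : V) :
    (T.deleteEdges {s(x, y)}).Reachable v x ∨ (T.deleteEdges {s(x, y)}).Reachable v y := by
  suffices h : ∀ {a z} (_ : T.Walk a z),
      (T.deleteEdges {s(x, y)}).Reachable z x ∨ (T.deleteEdges {s(x, y)}).Reachable z y →
      (T.deleteEdges {s(x, y)}).Reachable a x ∨ (T.deleteEdges {s(x, y)}).Reachable a y from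
    h (hT.preconnected v x).some (.inl .rfl)
  intro a z p hz
  induction p with
  | nil => exact hz
  | @cons u w _ huw _ ih =>
    by_cases he : s(u, w) = s(x, y)
    · rcases Sym2.eq_iff.mp he with ⟨rfl, -⟩ | ⟨rfl, -⟩
      exacts [.inl .rfl, .inr .rfl]
    · have huw' : (T.deleteEdges {s(x, y)}).Adj u w := by simp [huw, he]
      exact (ih hz).imp huw'.reachable.trans huw'.reachable.trans

end SimpleGraph

section FarSide

variable {V : Type*} {T : SimpleGraph V} {c x y u w : V} {e : Sym2 V}

def farSide (T : SimpleGraph V) (c : V) (e : Sym2 V) : Set V :=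
  {v | ¬ (T.deleteEdges {e}).Reachable v c}

lemma mem_farSide_of_reachable (h : (T.deleteEdges {e}).Reachable u w)
    (hu : u ∈ farSide T c e) : w ∈ farSide T c e :=
  fun hw => hu (h.trans hw)

lemma exists_eq_mk_mem_farSide_notMem_farSide (hT : T.IsTree) (he : e ∈ T.edgeSet) (c : V) :
    ∃ x y, e = s(x, y) ∧ x ∈ farSide T c e ∧ y ∉ farSide T c e := by
  induction e with | h a b
  have hbridge : ¬ (T.deleteEdges {s(a, b)}).Reachable a b :=
    isAcyclic_iff_forall_isBridge.mp hT.isAcyclic he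
  rcases hT.connected.reachable_or_reachable_deleteEdges a b c with hca | hcb
  · exact ⟨b, a, Sym2.eq_swap, fun hbc => hbridge (hbc.trans hca).symm, not_not.mpr hca.symm⟩
  · exact ⟨a, b, rfl, fun hac => hbridge (hac.trans hcb), not_not.mpr hcb.symm⟩

lemma farSide_eq_setOf_reachable (hT : T.Connected) (hx : x ∈ farSide T c s(x, y))
    (hy : y ∉ farSide T c s(x, y)) :
    farSide T c s(x, y) = {w | (T.deleteEdges {s(x, y)}).Reachable x w} := by
  ext w
  refine ⟨fun hw => ?_, fun hw => mem_farSide_of_reachable hw hx⟩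
  rcases hT.reachable_or_reachable_deleteEdges x y w with hwx | hwy
  · exact hwx.symm
  · exact absurd (hwy.trans (not_not.mp hy)) hw

lemma farSide_ssubset_farSide (hT : T.Connected) {ea eb : Sym2 V}
    (hsep : ∀ v ∈ eb, v ∈ farSide T c ea) : farSide T c eb ⊂ farSide T c ea := by
  classical
  induction eb with | h a b
  refine Set.ssubset_iff_of_subset (fun v hv hva => ?_) |>.mpr ?_
  · obtain ⟨p⟩ := hva
    have hab := (p.mapLe (deleteEdges_le _)).mem_edges_of_not_reachable_deleteEdges hv
    rw [Walk.edges_mapLe_eq_edges] at hab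
    exact hsep a (Sym2.mem_mk_left a b) ⟨p.dropUntil a (p.fst_mem_support_of_mem_edges hab)⟩
  · rcases hT.reachable_or_reachable_deleteEdges a b c with hca | hcb
    · exact ⟨a, hsep a (Sym2.mem_mk_left a b), not_not.mpr hca.symm⟩
    · exact ⟨b, hsep b (Sym2.mem_mk_right a b), not_not.mpr hcb.symm⟩

end FarSide

section Partition

variable {V : Type*} [Finite V] {T : SimpleGraph V} {e : Sym2 V}

lemma componentSizes_eq_pair {G : SimpleGraph V} {x y : V} (hxy : ¬ G.Reachable x y)
    (hcover : ∀ w, G.Reachable x w ∨ G.Reachable y w) :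
    componentSizes G = {{w | G.Reachable x w}.ncard, {w | G.Reachable y w}.ncard} := by
  classical
  have hsupp : ∀ z, (G.connectedComponentMk z).supp = {w | G.Reachable z w} := fun z => by
    ext w
    simp [ConnectedComponent.eq, reachable_comm]
  have huniv : ∀ _ : Fintype G.ConnectedComponent,
      Finset.univ = {G.connectedComponentMk x, G.connectedComponentMk y} := fun _ => by
    ext C
    induction C using ConnectedComponent.ind with | h w
    rcases hcover w with hw | hw <;> simp [ConnectedComponent.eq, hw.symm]
  have hne : G.connectedComponentMk x ≠ G.connectedComponentMk y :=
    fun h => hxy (ConnectedComponent.exact h)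
  simp [componentSizes, huniv, Finset.insert_val_of_notMem (Finset.notMem_singleton.mpr hne),
    hsupp]

lemma theta_singleton_eq (hT : T.IsTree) (he : e ∈ T.edgeSet) (c : V) :
    theta T {e} = {(farSide T c e).ncard, (farSide T c e)ᶜ.ncard} := by
  obtain ⟨x, y, rfl, hx, hy⟩ := exists_eq_mk_mem_farSide_notMem_farSide hT he c
  have hfar := farSide_eq_setOf_reachable hT.connected hx hy
  have hnear : (farSide T c s(x, y))ᶜ = {w | (T.deleteEdges {s(x, y)}).Reachable c w} := by
    ext w
    simp [farSide, reachable_comm]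
  rw [theta, hnear, hfar]
  refine componentSizes_eq_pair hx fun w => ?_
  by_cases hw : w ∈ farSide T c s(x, y)
  · exact .inl (by rwa [hfar] at hw)
  · exact .inr (not_not.mp hw).symm

end Partition

section Weight

variable {V : Type*} [Finite V] {T G : SimpleGraph V} {u v : V}

lemma ncard_setOf_reachable_le_weight (hG : G ≤ T) (huv : ¬ G.Reachable u v) :
    {w | G.Reachable u w}.ncard ≤ weight T v := by
  classical
  let H := ((⊤ : T.Subgraph).deleteVerts {v}).coe
  let φ : T.induce {v}ᶜ →g H := ⟨fun w => ⟨w, Set.mem_univ _, w.2⟩, fun {a b} h => by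
    simpa [H] using ⟨a.2, b.2, h⟩⟩
  have hu : u ∈ ({v}ᶜ : Set V) := fun h => huv (h ▸ .rfl)
  calc {w | G.Reachable u w}.ncard
      ≤ (Subtype.val '' (H.connectedComponentMk (φ ⟨u, hu⟩)).supp).ncard := by
        refine Set.ncard_le_ncard (fun w ⟨p⟩ => ?_) (Set.toFinite _)
        have hp : ∀ z ∈ p.support, z ∈ ({v}ᶜ : Set V) := fun z hz hzv =>
          huv ⟨p.takeUntil z hz |>.copy rfl hzv⟩
        refine ⟨φ ⟨w, hp w p.end_mem_support⟩, ConnectedComponent.sound ?_, rfl⟩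
        have hp' : ∀ z ∈ (p.mapLe hG).support, z ∈ ({v}ᶜ : Set V) := by
          rwa [Walk.support_mapLe_eq_support]
        exact (((p.mapLe hG).induce _ hp').reachable.map φ).symm
    _ = (H.connectedComponentMk (φ ⟨u, hu⟩)).supp.ncard :=
        Set.ncard_image_of_injective _ Subtype.val_injective
    _ ≤ weight T v := le_csSup (Set.finite_range _).bddAbove ⟨_, rfl⟩

lemma weight_le_of_forall_ncard_le {m : ℕ}
    (hG : ∀ a b, T.Adj a b → a ≠ v → b ≠ v → G.Adj a b)
    (hm : ∀ u ≠ v, ({w | G.Reachable u w} \ {v}).ncard ≤ m) : weight T v ≤ m := by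
  let φ : ((⊤ : T.Subgraph).deleteVerts {v}).coe →g G :=
    ⟨Subtype.val, fun {a b} h => by
      simp only [Subgraph.coe_adj, Subgraph.deleteVerts_adj] at h
      exact hG a b h.2.2.2.2 h.2.1 h.2.2.2.1⟩
  refine csSup_le' ?_
  rintro _ ⟨D, rfl⟩
  induction D using ConnectedComponent.ind with | h a
  calc _ = (Subtype.val '' (connectedComponentMk _ a).supp).ncard :=
        (Set.ncard_image_of_injective _ Subtype.val_injective).symm
    _ ≤ ({w | G.Reachable a w} \ {v}).ncard := by
        refine Set.ncard_le_ncard ?_ (Set.toFinite _)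
        rintro _ ⟨w, hw, rfl⟩
        exact ⟨((ConnectedComponent.exact hw).map φ).symm, w.2.2⟩
    _ ≤ m := hm a a.2.2

lemma weight_lt_weight_of_centroid_eq_singleton {c : V} (hc : centroid T = {c}) (hvc : v ≠ c) :
    weight T c < weight T v := by
  have hcmin : c ∈ centroid T := hc ▸ rfl
  have hvnot : v ∉ centroid T := hc ▸ hvc
  obtain ⟨u, hu⟩ := not_forall.mp hvnot
  exact (hcmin u).trans_lt (not_le.mp hu)

end Weight

section Centroid

variable {V : Type*} [Fintype V] {T : SimpleGraph V} {c : V} {e : Sym2 V}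

theorem two_mul_ncard_farSide_lt (hT : T.IsTree) (hc : centroid T = {c}) (he : e ∈ T.edgeSet) :
    2 * (farSide T c e).ncard < Fintype.card V := by
  obtain ⟨x, y, rfl, hx, hy⟩ := exists_eq_mk_mem_farSide_notMem_farSide hT he c
  have hfar := farSide_eq_setOf_reachable hT.connected hx hy
  set A := farSide T c s(x, y)
  have hxc : x ≠ c := fun h => hx (h ▸ .rfl)
  have hA_le : A.ncard ≤ weight T c := by
    rw [hfar]
    exact ncard_setOf_reachable_le_weight (deleteEdges_le _) hx
  have hweight_x : weight T x ≤ max (A.ncard - 1) Aᶜ.ncard := by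
    refine weight_le_of_forall_ncard_le (G := T.deleteEdges {s(x, y)})
      (fun a b hab ha hb => ?_) fun u _ => ?_
    · simp [hab, ha, hb]
    by_cases hu : u ∈ A
    · calc _ ≤ (A \ {x}).ncard := Set.ncard_le_ncard
            (Set.sdiff_subset_sdiff_left fun w hw => mem_farSide_of_reachable hw hu)
            (Set.toFinite _)
        _ = A.ncard - 1 := Set.ncard_sdiff_singleton_of_mem hx
        _ ≤ _ := le_max_left _ _
    · calc _ ≤ Aᶜ.ncard := Set.ncard_le_ncard
            (fun w hw hwA => hu (mem_farSide_of_reachable hw.1.symm hwA)) (Set.toFinite _)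
        _ ≤ _ := le_max_right _ _
  have hcx := weight_lt_weight_of_centroid_eq_singleton hc hxc
  have hA_pos : 0 < A.ncard := (Set.ncard_pos A.toFinite).mpr ⟨x, hx⟩
  have hA_add := Set.ncard_add_ncard_compl A
  rw [Nat.card_eq_fintype_card] at hA_add
  omega

lemma eq_ncard_farSide_of_theta_eq (hT : T.IsTree) (hc : centroid T = {c}) (he : e ∈ T.edgeSet)
    {i : ℕ} (hi : i ≤ Fintype.card V - i) (h : theta T {e} = {Fintype.card V - i, i}) :
    i = (farSide T c e).ncard := by
  have hmem : i ∈ theta T {e} := by simp [h]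
  rw [theta_singleton_eq hT he c, Set.ncard_compl, Nat.card_eq_fintype_card] at hmem
  have := two_mul_ncard_farSide_lt hT hc he
  simp only [Multiset.insert_eq_cons, Multiset.mem_cons, Multiset.mem_singleton] at hmem
  omega

end Centroid

theorem theta_gt_of_separates_general {V : Type*} [Fintype V] (T : SimpleGraph V)
    (hT : T.IsTree) (n : ℕ) (hn : n = Fintype.card V)
    (c : V) (hc : centroid T = {c})
    (ea eb : Sym2 V) (hea : ea ∈ T.edgeSet) (heb : eb ∈ T.edgeSet)
    (hsep : ∀ v ∈ eb, ¬ (T.deleteEdges {ea}).Reachable v c)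
    (i j : ℕ) (hi : i ≤ n - i) (hj : j ≤ n - j)
    (ha : theta T {ea} = {n - i, i}) (hb : theta T {eb} = {n - j, j}) :
    j < i := by
  subst hn
  rw [eq_ncard_farSide_of_theta_eq hT hc hea hi ha, eq_ncard_farSide_of_theta_eq hT hc heb hj hb]
  exact Set.ncard_lt_ncard (farSide_ssubset_farSide hT.connected hsep)

/-- If `T` is a tree with a single centroid `c` and the edge `e_a` separates the edge
`e_b` from `c`, then `θ_T(e_a) > θ_T(e_b)`, i.e. the smaller part of `θ_T(e_a)`
exceeds the smaller part of `θ_T(e_b)`. -/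
theorem theta_gt_of_separates {V : Type*} [Fintype V] (T : SimpleGraph V)
    (hT : T.IsTree) (n : ℕ) (hn : n = Fintype.card V)
    (c : V) (hc : centroid T = {c})
    (ea eb : Sym2 V) (hea : ea ∈ T.edgeSet) (heb : eb ∈ T.edgeSet) (hne : ea ≠ eb)
    (hsep : ∀ v ∈ eb, ¬ (T.deleteEdges {ea}).Reachable v c)
    (i j : ℕ) (hi : i ≤ n - i) (hj : j ≤ n - j)
    (ha : theta T {ea} = {n - i, i}) (hb : theta T {eb} = {n - j, j}) :
    j < i :=
  theta_gt_of_separates_general T hT n hn c hc ea eb hea heb hsep i j hi hj ha hb
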